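/- Let J ⊂ I ⊂ S_f be monomial ideals, D : I/J = ⊕_{i=1}^r u_i K[Z_i] a Stanley decomposition of I/J, and d = max{|Z_i| : 1 ≤ i ≤ r}. Then H_{I/J}(t) = P_{I/J}(t)/(1-t)^d for a polynomial P_{I/J}(t) with P_{I/J}(1) = |{i : |Z_i| = d}|. Consequently, the number of Stanley spaces of maximal dimension in a Stanley decomposition of I/J is independent of the chosen Stanley decomposition. -/

import Mathlib

/-!
Combinatorial model of the localized polynomial ring `S_f`, where
`S = K[x_1, …, x_n]`, `A ⊆ {1, …, n}` and `f = ∏_{j ∈ A} x_j`.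

Since all the `ℤⁿ`-graded components of `S_f` are at most one-dimensional over `K`,
monomial `K`-subspaces of `S_f` (in particular monomial ideals, Stanley spaces and
modules `I/J`) are faithfully encoded by their sets of exponent vectors `a : Fin n → ℤ`,
direct sum decompositions into monomial subspaces correspond exactly to partitions of
the exponent sets, and (for those sets `Z` considered here) `u·K[Z]` is automatically a
free `K[Z]`-module.
-/

/-- Exponent vectors of the monomials of `S_f`: all `a : ℤⁿ` with `a j ≥ 0` for `j ∉ A`. -/
def SfMon {n : ℕ} (A : Finset (Fin n)) : Set (Fin n → ℤ) :=
  {a | ∀ j, j ∉ A → 0 ≤ a j}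

/-- `M` is the set of exponent vectors of the monomials of a monomial ideal of `S_f`
(for `A = ∅` this is a monomial ideal of the polynomial ring `S` itself). -/
def IsMonomialIdeal {n : ℕ} (A : Finset (Fin n)) (M : Set (Fin n → ℤ)) : Prop :=
  M ⊆ SfMon A ∧ ∀ a ∈ M, ∀ c ∈ SfMon A, a + c ∈ M

/-- Admissible sets of "variables" for Stanley spaces in `S_f`: `(i, true)` stands for
`x i` and `(i, false)` for `x i⁻¹`; inverse variables exist only for `i ∈ A`, and
`{x i, x i⁻¹} ⊄ Z`. -/
def ZOk {n : ℕ} (A : Finset (Fin n)) (Z : Finset (Fin n × Bool)) : Prop :=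
  (∀ i : Fin n, (i, false) ∈ Z → i ∈ A) ∧
  ∀ i : Fin n, ¬((i, true) ∈ Z ∧ (i, false) ∈ Z)

/-- Exponent vectors of the monomials of the Stanley space `u·K[Z]`. -/
def stanleySet {n : ℕ} (u : Fin n → ℤ) (Z : Finset (Fin n × Bool)) : Set (Fin n → ℤ) :=
  {a | ∀ i : Fin n, ((i, true) ∈ Z → u i ≤ a i) ∧ ((i, false) ∈ Z → a i ≤ u i) ∧
      ((i, true) ∉ Z → (i, false) ∉ Z → a i = u i)}

/-- The family of Stanley spaces `u i · K[Z i]` is a Stanley decomposition of the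
monomial `K`-vector space whose monomials have exponent vectors in `M`. -/
def IsStanleyDecompOn {n : ℕ} (A : Finset (Fin n)) (M : Set (Fin n → ℤ)) {ι : Type}
    (u : ι → Fin n → ℤ) (Z : ι → Finset (Fin n × Bool)) : Prop :=
  Finite ι ∧ (∀ i, ZOk A (Z i)) ∧
  Pairwise (fun i j : ι => Disjoint (stanleySet (u i) (Z i)) (stanleySet (u j) (Z j))) ∧
  (⋃ i, stanleySet (u i) (Z i)) = M

/-- Stanley depth of the monomial `K`-space with exponent set `M` (value `⊤` for `M = ∅`). -/
noncomputable def sdepth {n : ℕ} (A : Finset (Fin n)) (M : Set (Fin n → ℤ)) : ℕ∞ :=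
  sSup {k : ℕ∞ | ∃ (r : ℕ) (u : Fin r → Fin n → ℤ) (Z : Fin r → Finset (Fin n × Bool)),
    IsStanleyDecompOn A M u Z ∧ ∀ i, k ≤ ((Z i).card : ℕ∞)}

/-- The exponent vector of `f = ∏_{j ∈ A} x_j`. -/
def fVec {n : ℕ} (A : Finset (Fin n)) : Fin n → ℤ := fun i => if i ∈ A then 1 else 0

/-- Localization at `f` of a monomial ideal (given by its set of exponent vectors). -/
def locSet {n : ℕ} (A : Finset (Fin n)) (M : Set (Fin n → ℤ)) : Set (Fin n → ℤ) :=
  {b ∈ SfMon A | ∃ k : ℕ, b + (k : ℤ) • fVec A ∈ M}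

/-- `|a| = Σ_i |a_i|`, the degree used for the Hilbert series. -/
def degAbs {n : ℕ} (a : Fin n → ℤ) : ℕ := ∑ i, (a i).natAbs

/-- The Hilbert series `H_M(t) = Σ_d H(M,d) t^d`, `H(M,d) = #{a ∈ M : |a| = d}`, of the
`ℤⁿ`-graded `K`-vector space with monomial exponent set `M`. -/
noncomputable def hilbSeries {n : ℕ} (M : Set (Fin n → ℤ)) : PowerSeries ℚ :=
  PowerSeries.mk fun d => (({a ∈ M | degAbs a = d}).ncard : ℚ)

/-- A prime filtration `J = N 0 ⊂ N 1 ⊂ … ⊂ N r = I` of `I/J` by monomial ideals of `S_f`,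
with `i`-th factor isomorphic, as a `ℤⁿ`-graded module, to `(S_f/P_{B i})(-a i)`, where
`P_B` is the monomial prime ideal generated by the variables `x j`, `j ∈ B`. -/
def IsPrimeFiltration {n : ℕ} (A : Finset (Fin n)) (J I : Set (Fin n → ℤ)) (r : ℕ)
    (N : Fin (r + 1) → Set (Fin n → ℤ)) (B : Fin r → Finset (Fin n))
    (a : Fin r → Fin n → ℤ) : Prop :=
  N 0 = J ∧ N (Fin.last r) = I ∧
  (∀ i : Fin (r + 1), IsMonomialIdeal A (N i)) ∧
  (∀ i : Fin r, N i.castSucc ⊂ N i.succ) ∧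
  (∀ i : Fin r, ∀ j ∈ A, j ∉ B i) ∧
  (∀ i : Fin r, ∀ j, 0 ≤ a i j) ∧
  (∀ i : Fin r, ∀ j ∈ A, a i j = 0) ∧
  (∀ i : Fin r, N i.succ \ N i.castSucc =
    {b | ∃ c ∈ SfMon A, (∀ j ∈ B i, c j = 0) ∧ b = a i + c})

/-- `fdepth` of `I/J` (value `⊤` for `I = J`); `dim S_f/P_B = n - |B|`. -/
noncomputable def fdepth {n : ℕ} (A : Finset (Fin n)) (J I : Set (Fin n → ℤ)) : ℕ∞ :=
  sSup {k : ℕ∞ | ∃ (r : ℕ) (N : Fin (r + 1) → Set (Fin n → ℤ)) (B : Fin r → Finset (Fin n))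
      (a : Fin r → Fin n → ℤ), IsPrimeFiltration A J I r N B a ∧
      ∀ i, k ≤ ((n - (B i).card : ℕ) : ℕ∞)}

/-- The set of exponent vectors of the monomials of the colon ideal `(J :_{S_f} I)`,
which is the annihilator of `I/J`. -/
def colonSet {n : ℕ} (A : Finset (Fin n)) (I J : Set (Fin n → ℤ)) : Set (Fin n → ℤ) :=
  {c ∈ SfMon A | ∀ a ∈ I, a + c ∈ J}

/-- The monomial prime `P_B·S_f` contains the monomial ideal with exponent set `Q`. -/
def primeContainsIdeal {n : ℕ} (B : Finset (Fin n)) (Q : Set (Fin n → ℤ)) : Prop :=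
  ∀ c ∈ Q, ∃ j ∈ B, 1 ≤ c j

/-- `P_B·S_f` is a minimal prime ideal of the module `I/J`, i.e. a prime of `S_f`
(so `B ∩ A = ∅`) minimal among those containing `ann(I/J) = (J : I)`. -/
def IsMinimalPrimeOf {n : ℕ} (A B : Finset (Fin n)) (I J : Set (Fin n → ℤ)) : Prop :=
  (∀ j ∈ A, j ∉ B) ∧ primeContainsIdeal B (colonSet A I J) ∧
  ∀ B' ⊆ B, primeContainsIdeal B' (colonSet A I J) → B' = B

/-!
The Stanley space `u·K[Z]` is a product over the coordinates of a point, a ray `[u_i, ∞)` or a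
ray `(-∞, u_i]` of `ℤ`, and `|a| = Σ |a_i|` is additive, so its Hilbert series is the product of
the one-variable series of the factors: `t^{|u_i|}` for a point, and `Q(t)/(1-t)` with `Q(1) = 1`
for a ray (a polynomial for the part of the ray below `0`, plus `t^m/(1-t)`). Hence
`H_{u K[Z]} = Q_Z/(1-t)^{|Z|}` with `Q_Z(1) = 1`, and summing over `D` gives
`P = Σ_i Q_{Z_i} (1-t)^{d-|Z_i|}`, whose value at `1` counts the spaces of dimension `d`.
That count is positive, and a series `P/(1-t)^d` with `P(1) ≠ 0` determines `d` and `P`: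
for `d < e`, the numerator `P (1-t)^{e-d}` vanishes at `1`.
-/

noncomputable def weightSeries {α : Type*} (w : α → ℕ) (M : Set α) : PowerSeries ℚ :=
  PowerSeries.mk fun d => (({a ∈ M | w a = d}).ncard : ℚ)

section weightSeries

variable {α : Type*} (w : α → ℕ)

theorem weightSeries_iUnion {ι : Type*} [Fintype ι] (hw : ∀ d, {a | w a = d}.Finite)
    {S : ι → Set α} (hS : Pairwise (Function.onFun Disjoint S)) :
    weightSeries w (⋃ i, S i) = ∑ i, weightSeries w (S i) := by
  ext d
  have hslice : {a ∈ ⋃ i, S i | w a = d} = ⋃ i, {a ∈ S i | w a = d} := by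
    ext a; simp only [Set.mem_ofPred_eq, Set.mem_iUnion]; tauto
  rw [weightSeries, PowerSeries.coeff_mk, hslice,
    Set.ncard_iUnion_of_finite (fun i => (hw d).subset fun a ha => ha.2)
      (fun i j hij => (hS hij).mono (fun a ha => ha.1) (fun a ha => ha.1)),
    finsum_eq_sum_of_fintype, map_sum]
  simp [weightSeries]

theorem weightSeries_union (hw : ∀ d, {a | w a = d}.Finite) {s t : Set α}
    (hst : Disjoint s t) : weightSeries w (s ∪ t) = weightSeries w s + weightSeries w t := by
  rw [Set.union_eq_iUnion, weightSeries_iUnion w hw, Fintype.sum_bool, cond_true, cond_false]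
  intro i j hij
  cases i <;> cases j <;> simp_all [Function.onFun, disjoint_comm]

theorem weightSeries_image {β : Type*} {f : β → α} (hf : Function.Injective f) (M : Set β) :
    weightSeries w (f '' M) = weightSeries (w ∘ f) M := by
  ext d
  have hslice : {a ∈ f '' M | w a = d} = f '' {b ∈ M | w (f b) = d} := by
    ext a; simp only [Set.mem_ofPred_eq, Set.mem_image]; aesop
  simp only [weightSeries, PowerSeries.coeff_mk, hslice, Set.ncard_image_of_injective _ hf,
    Function.comp_apply]

theorem weightSeries_finset (s : Finset α) :
    weightSeries w s = ((∑ a ∈ s, Polynomial.X ^ w a : Polynomial ℚ) : PowerSeries ℚ) := by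
  classical
  ext d
  have hslice : {a ∈ (s : Set α) | w a = d} = ↑(s.filter fun a => w a = d) := by
    ext a; simp
  simp only [weightSeries, PowerSeries.coeff_mk, Polynomial.coeff_coe, Polynomial.finsetSum_coeff,
    Polynomial.coeff_X_pow, hslice, Set.ncard_coe_finset]
  rw [Finset.sum_boole]
  simp [eq_comm]

end weightSeries

theorem weightSeries_pi {ι : Type*} [Fintype ι] [DecidableEq ι] {α : ι → Type*}
    (w : ∀ i, α i → ℕ) (hw : ∀ i d, {a | w i a = d}.Finite) (S : ∀ i, Set (α i)) :
    weightSeries (fun a => ∑ i, w i (a i)) (Set.univ.pi S) = ∏ i, weightSeries (w i) (S i) := by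
  ext d
  set L : Finset (ι →₀ ℕ) := Finset.univ.finsuppAntidiag d with hL
  have hslice : {a ∈ Set.univ.pi S | ∑ i, w i (a i) = d} =
      ⋃ l ∈ (L : Set (ι →₀ ℕ)), Set.univ.pi fun i => {b ∈ S i | w i b = l i} := by
    ext a
    simp only [Set.mem_ofPred_eq, Set.mem_pi, Set.mem_univ, true_implies, Set.mem_iUnion,
      Finset.mem_coe, hL, Finset.mem_finsuppAntidiag, Finset.subset_univ, and_true]
    constructor
    · rintro ⟨ha, rfl⟩
      exact ⟨Finsupp.equivFunOnFinite.symm fun i => w i (a i), by simp, fun i => ⟨ha i, by simp⟩⟩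
    · rintro ⟨l, rfl, ha⟩
      exact ⟨fun i => (ha i).1, Finset.sum_congr rfl fun i _ => (ha i).2⟩
  have hfin : ∀ l : ι →₀ ℕ, (Set.univ.pi fun i => {b ∈ S i | w i b = l i}).Finite :=
    fun l => Set.Finite.pi fun i => (hw i (l i)).subset fun b hb => hb.2
  have hdisj : (L : Set (ι →₀ ℕ)).PairwiseDisjoint fun l => Set.univ.pi fun i => {b ∈ S i | w i b = l i} := by
    intro l _ l' _ hll'
    refine Set.disjoint_left.mpr fun a ha ha' => hll' (Finsupp.ext fun i => ?_)
    rw [← (ha i trivial).2, (ha' i trivial).2]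
  have hpi : ∀ l : ι →₀ ℕ, (Set.univ.pi fun i => {b ∈ S i | w i b = l i}).ncard =
      ∏ i, {b ∈ S i | w i b = l i}.ncard := by
    intro l
    apply Nat.cast_injective (R := ℕ∞)
    rw [(hfin l).cast_ncard_eq, Set.encard_pi_eq_prod_encard, Nat.cast_prod]
    exact Finset.prod_congr rfl fun i _ => ((hw i (l i)).subset fun b hb => hb.2).cast_ncard_eq.symm
  rw [weightSeries, PowerSeries.coeff_mk, hslice,
    (Finset.finite_toSet _).ncard_biUnion (fun l _ => hfin l) hdisj, finsum_mem_coe_finset,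
    PowerSeries.coeff_prod]
  push_cast [hpi]
  simp only [hL, weightSeries, PowerSeries.coeff_mk]

/-- `F = P / (1 - t) ^ k` with `P(1) = 1`: a pole of order `k` at `t = 1`, normalized. -/
def HasUnitPole (k : ℕ) (F : PowerSeries ℚ) : Prop :=
  ∃ P : Polynomial ℚ, F * (1 - PowerSeries.X) ^ k = (P : PowerSeries ℚ) ∧ P.eval 1 = 1

theorem hasUnitPole_zero_X_pow (m : ℕ) :
    HasUnitPole 0 ((Polynomial.X ^ m : Polynomial ℚ) : PowerSeries ℚ) :=
  ⟨Polynomial.X ^ m, by simp, by simp⟩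

theorem HasUnitPole.mul {k l : ℕ} {F G : PowerSeries ℚ} (hF : HasUnitPole k F)
    (hG : HasUnitPole l G) : HasUnitPole (k + l) (F * G) := by
  obtain ⟨P, hP, hP1⟩ := hF
  obtain ⟨Q, hQ, hQ1⟩ := hG
  refine ⟨P * Q, ?_, by simp [hP1, hQ1]⟩
  rw [Polynomial.coe_mul, ← hP, ← hQ]
  ring

theorem HasUnitPole.prod {ι : Type*} {s : Finset ι} {k : ι → ℕ} {F : ι → PowerSeries ℚ}
    (h : ∀ i ∈ s, HasUnitPole (k i) (F i)) : HasUnitPole (∑ i ∈ s, k i) (∏ i ∈ s, F i) := by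
  classical
  induction s using Finset.induction_on with
  | empty => exact ⟨1, by simp, by simp⟩
  | insert i s hi ih =>
    rw [Finset.sum_insert hi, Finset.prod_insert hi]
    exact (h i (s.mem_insert_self i)).mul (ih fun j hj => h j (Finset.mem_insert_of_mem hj))

theorem exists_sum_mul_one_sub_X_pow_sup {ι : Type*} [Fintype ι] {k : ι → ℕ}
    {F : ι → PowerSeries ℚ} (hF : ∀ i, HasUnitPole (k i) (F i)) :
    ∃ P : Polynomial ℚ,
      (∑ i, F i) * (1 - PowerSeries.X) ^ (Finset.univ.sup k) = (P : PowerSeries ℚ) ∧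
      P.eval 1 = ((Finset.univ.filter fun i => k i = Finset.univ.sup k).card : ℚ) := by
  choose P hP hP1 using hF
  set d := Finset.univ.sup k
  have hle : ∀ i, k i ≤ d := fun i => Finset.le_sup (Finset.mem_univ i)
  refine ⟨∑ i, P i * (1 - Polynomial.X) ^ (d - k i), ?_, ?_⟩
  · rw [Finset.sum_mul, ← Polynomial.coeToPowerSeries.ringHom_apply, map_sum]
    refine Finset.sum_congr rfl fun i _ => ?_
    rw [Polynomial.coeToPowerSeries.ringHom_apply, Polynomial.coe_mul, ← hP,
      ← Nat.add_sub_cancel' (hle i), pow_add, Nat.add_sub_cancel_left, mul_assoc]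
    push_cast
    rfl
  · simp only [Polynomial.eval_finsetSum, Polynomial.eval_mul, hP1, Polynomial.eval_pow,
      Polynomial.eval_sub, Polynomial.eval_one, Polynomial.eval_X, sub_self, one_mul, zero_pow_eq]
    rw [← Finset.sum_boole]
    exact Finset.sum_congr rfl fun i _ => by simp [Nat.sub_eq_zero_iff_le, (hle i).ge_iff_eq]

theorem le_of_mul_one_sub_X_pow_eq {F : PowerSeries ℚ} {d e : ℕ} {P Q : Polynomial ℚ}
    (hP : F * (1 - PowerSeries.X) ^ d = (P : PowerSeries ℚ))
    (hQ : F * (1 - PowerSeries.X) ^ e = (Q : PowerSeries ℚ))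
    (hP1 : P.eval 1 ≠ 0) : d ≤ e := by
  by_contra! hlt
  obtain ⟨m, rfl⟩ := Nat.exists_eq_add_of_lt hlt
  have hPQ : P = Q * (1 - Polynomial.X) ^ (m + 1) := by
    rw [← Polynomial.coe_inj, ← hP, add_assoc, pow_add, ← mul_assoc, hQ]
    push_cast
    rfl
  exact hP1 (by simp [hPQ])

theorem mul_one_sub_X_pow_eq_unique {F : PowerSeries ℚ} {d e : ℕ} {P Q : Polynomial ℚ}
    (hP : F * (1 - PowerSeries.X) ^ d = (P : PowerSeries ℚ))
    (hQ : F * (1 - PowerSeries.X) ^ e = (Q : PowerSeries ℚ))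
    (hP1 : P.eval 1 ≠ 0) (hQ1 : Q.eval 1 ≠ 0) : d = e ∧ P = Q := by
  obtain rfl := le_antisymm (le_of_mul_one_sub_X_pow_eq hP hQ hP1)
    (le_of_mul_one_sub_X_pow_eq hQ hP hQ1)
  exact ⟨rfl, Polynomial.coe_inj.mp (hP.symm.trans hQ)⟩

theorem Finset.card_filter_eq_sup_ne_zero {ι : Type*} [Fintype ι] [Nonempty ι] (k : ι → ℕ) :
    (Finset.univ.filter fun i => k i = Finset.univ.sup k).card ≠ 0 := by
  obtain ⟨i, -, hi⟩ := Finset.univ.exists_mem_eq_sup Finset.univ_nonempty k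
  exact Finset.card_ne_zero_of_mem (Finset.mem_filter.mpr ⟨Finset.mem_univ i, hi.symm⟩)

theorem Int.finite_setOf_natAbs_eq (d : ℕ) : {v : ℤ | v.natAbs = d}.Finite :=
  (Set.finite_Icc (-(d : ℤ)) d).subset fun v hv => by
    simp only [Set.mem_ofPred_eq] at hv; simp only [Set.mem_Icc]; omega

theorem weightSeries_natAbs_Ici_natCast (m : ℕ) :
    weightSeries Int.natAbs (Set.Ici (m : ℤ)) = PowerSeries.X ^ m * PowerSeries.mk 1 := by
  ext d
  have hslice : {v ∈ Set.Ici (m : ℤ) | v.natAbs = d} = if m ≤ d then {(d : ℤ)} else ∅ := by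
    ext v; split_ifs <;> simp only [Set.mem_ofPred_eq, Set.mem_Ici, Set.mem_singleton_iff,
      Set.mem_empty_iff_false] <;> grind
  rw [PowerSeries.coeff_X_pow_mul', weightSeries, PowerSeries.coeff_mk, hslice]
  split_ifs <;> simp

theorem hasUnitPole_natAbs_Ici (c : ℤ) : HasUnitPole 1 (weightSeries Int.natAbs (Set.Ici c)) := by
  have hsplit : Set.Ici c = Set.Ici (c.toNat : ℤ) ∪ ↑(Finset.Ico c 0) := by
    ext v; simp only [Set.mem_Ici, Set.mem_union, Finset.coe_Ico, Set.mem_Ico]; omega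
  have hdisj : Disjoint (Set.Ici (c.toNat : ℤ)) ↑(Finset.Ico c 0) := by
    rw [Set.disjoint_left]; intro v; simp only [Set.mem_Ici, Finset.coe_Ico, Set.mem_Ico]; omega
  set Q : Polynomial ℚ := ∑ v ∈ Finset.Ico c 0, Polynomial.X ^ v.natAbs
  refine ⟨Polynomial.X ^ c.toNat + Q * (1 - Polynomial.X), ?_, by simp⟩
  rw [hsplit, weightSeries_union _ Int.finite_setOf_natAbs_eq hdisj,
    weightSeries_natAbs_Ici_natCast, weightSeries_finset, pow_one, add_mul, mul_assoc,
    PowerSeries.mk_one_mul_one_sub_eq_one]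
  push_cast
  ring

theorem hasUnitPole_natAbs_Iic (c : ℤ) : HasUnitPole 1 (weightSeries Int.natAbs (Set.Iic c)) := by
  rw [← neg_neg c, ← Set.image_neg_Ici, weightSeries_image _ neg_injective]
  simpa [Function.comp_def] using hasUnitPole_natAbs_Ici (-c)

theorem stanleySet_eq_pi {n : ℕ} (u : Fin n → ℤ) (Z : Finset (Fin n × Bool)) :
    stanleySet u Z = Set.univ.pi fun i => {v | ((i, true) ∈ Z → u i ≤ v) ∧
      ((i, false) ∈ Z → v ≤ u i) ∧ ((i, true) ∉ Z → (i, false) ∉ Z → v = u i)} := by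
  ext a; simp [stanleySet]

theorem hasUnitPole_stanleyCoord (c : ℤ) (up down : Prop) [Decidable up] [Decidable down]
    (h : ¬(up ∧ down)) :
    HasUnitPole ((if up then 1 else 0) + (if down then 1 else 0))
      (weightSeries Int.natAbs {v | (up → c ≤ v) ∧ (down → v ≤ c) ∧ (¬up → ¬down → v = c)}) := by
  by_cases hu : up <;> by_cases hd : down
  · exact absurd ⟨hu, hd⟩ h
  · simpa [hu, hd, Set.Ici] using hasUnitPole_natAbs_Ici c
  · simpa [hu, hd, Set.Iic] using hasUnitPole_natAbs_Iic c
  · simpa [hu, hd, ← Finset.coe_singleton, weightSeries_finset] using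
      hasUnitPole_zero_X_pow c.natAbs

theorem card_eq_sum_mem_true_add_mem_false {ι : Type*} [Fintype ι] [DecidableEq ι]
    (Z : Finset (ι × Bool)) :
    Z.card = ∑ i, ((if (i, true) ∈ Z then 1 else 0) + (if (i, false) ∈ Z then 1 else 0)) := by
  conv_lhs => rw [← Finset.filter_univ_mem Z, Finset.card_filter, Fintype.sum_prod_type]
  simp only [Fintype.sum_bool]

theorem finite_setOf_degAbs_eq {n : ℕ} (d : ℕ) : {a : Fin n → ℤ | degAbs a = d}.Finite := by
  refine (Set.Finite.pi fun _ => Set.finite_Icc (-(d : ℤ)) d).subset fun a ha i _ => ?_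
  have : (a i).natAbs ≤ d :=
    ha ▸ Finset.single_le_sum (f := fun j => (a j).natAbs) (fun j _ => Nat.zero_le _)
      (Finset.mem_univ i)
  simp only [Set.mem_Icc]
  omega

theorem hilbSeries_eq_weightSeries {n : ℕ} (M : Set (Fin n → ℤ)) :
    hilbSeries M = weightSeries (fun a => ∑ i, Int.natAbs (a i)) M :=
  rfl

theorem hilbSeries_iUnion {n : ℕ} {ι : Type*} [Fintype ι] {S : ι → Set (Fin n → ℤ)}
    (hS : Pairwise (Function.onFun Disjoint S)) :
    hilbSeries (⋃ i, S i) = ∑ i, hilbSeries (S i) :=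
  weightSeries_iUnion degAbs finite_setOf_degAbs_eq hS

theorem hasUnitPole_stanleySet {n : ℕ} (u : Fin n → ℤ) {Z : Finset (Fin n × Bool)}
    (hZ : ∀ i, ¬((i, true) ∈ Z ∧ (i, false) ∈ Z)) :
    HasUnitPole Z.card (hilbSeries (stanleySet u Z)) := by
  rw [card_eq_sum_mem_true_add_mem_false, stanleySet_eq_pi, hilbSeries_eq_weightSeries,
    weightSeries_pi (fun _ => Int.natAbs) (fun _ => Int.finite_setOf_natAbs_eq)]
  exact HasUnitPole.prod fun i _ => hasUnitPole_stanleyCoord (u i) _ _ (hZ i)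

theorem IsStanleyDecompOn.exists_hilbSeries_mul_one_sub_X_pow {n : ℕ} {A : Finset (Fin n)}
    {M : Set (Fin n → ℤ)} {ι : Type} [Fintype ι] {u : ι → Fin n → ℤ}
    {Z : ι → Finset (Fin n × Bool)} (hD : IsStanleyDecompOn A M u Z) :
    ∃ P : Polynomial ℚ,
      hilbSeries M * (1 - PowerSeries.X) ^ (Finset.univ.sup fun i => (Z i).card) =
        (P : PowerSeries ℚ) ∧
      P.eval 1 = ((Finset.univ.filter fun i =>
        (Z i).card = Finset.univ.sup fun j => (Z j).card).card : ℚ) := by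
  obtain ⟨-, hZ, hdisj, rfl⟩ := hD
  rw [hilbSeries_iUnion hdisj]
  exact exists_sum_mul_one_sub_X_pow_sup fun i => hasUnitPole_stanleySet (u i) (hZ i).2

theorem IsStanleyDecompOn.card_filter_eq_sup_ne_zero {n : ℕ} {A : Finset (Fin n)}
    {M : Set (Fin n → ℤ)} {ι : Type} [Fintype ι] {u : ι → Fin n → ℤ}
    {Z : ι → Finset (Fin n × Bool)} (hD : IsStanleyDecompOn A M u Z) (hM : M.Nonempty) :
    (Finset.univ.filter fun i => (Z i).card = Finset.univ.sup fun j => (Z j).card).card ≠ 0 := by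
  obtain ⟨a, ha⟩ := hM
  rw [← hD.2.2.2, Set.mem_iUnion] at ha
  obtain ⟨i, -⟩ := ha
  have : Nonempty ι := ⟨i⟩
  exact Finset.card_filter_eq_sup_ne_zero _

theorem hilbert_series_stanley_decomposition_general {n : ℕ} (A : Finset (Fin n))
    (I J : Set (Fin n → ℤ))
    (hJI : J ⊂ I)
    {r : ℕ} (u : Fin r → Fin n → ℤ) (Z : Fin r → Finset (Fin n × Bool))
    (hD : IsStanleyDecompOn A (I \ J) u Z) :
    (∃ P : Polynomial ℚ,
      hilbSeries (I \ J) * (1 - PowerSeries.X) ^ (Finset.univ.sup fun i => (Z i).card) =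
        (P : PowerSeries ℚ) ∧
      P.eval 1 = ((Finset.univ.filter fun i : Fin r =>
          (Z i).card = Finset.univ.sup fun j => (Z j).card).card : ℚ)) ∧
    ∀ (r' : ℕ) (u' : Fin r' → Fin n → ℤ) (Z' : Fin r' → Finset (Fin n × Bool)),
      IsStanleyDecompOn A (I \ J) u' Z' →
      (Finset.univ.sup fun i => (Z i).card) = (Finset.univ.sup fun i => (Z' i).card) ∧
      (Finset.univ.filter fun i : Fin r =>
          (Z i).card = Finset.univ.sup fun j => (Z j).card).card =
        (Finset.univ.filter fun i : Fin r' =>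
          (Z' i).card = Finset.univ.sup fun j => (Z' j).card).card := by
  have hM : (I \ J).Nonempty := Set.nonempty_of_ssubset hJI
  obtain ⟨P, hP, hP1⟩ := hD.exists_hilbSeries_mul_one_sub_X_pow
  refine ⟨⟨P, hP, hP1⟩, fun r' u' Z' hD' => ?_⟩
  obtain ⟨P', hP', hP1'⟩ := hD'.exists_hilbSeries_mul_one_sub_X_pow
  have hP0 : P.eval 1 ≠ 0 := by rw [hP1]; exact_mod_cast hD.card_filter_eq_sup_ne_zero hM
  have hP0' : P'.eval 1 ≠ 0 := by rw [hP1']; exact_mod_cast hD'.card_filter_eq_sup_ne_zero hM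
  obtain ⟨hd, rfl⟩ := mul_one_sub_X_pow_eq_unique hP hP' hP0 hP0'
  exact ⟨hd, by exact_mod_cast hP1.symm.trans hP1'⟩

/-- For monomial ideals `J ⊂ I ⊂ S_f` and a Stanley decomposition
`D : I/J = ⊕_{i=1}^r u_i K[Z_i]` with `d = max{|Z_i|}`:
`H_{I/J}(t) = P_{I/J}(t)/(1-t)^d` with `P_{I/J}(1) = #{i : |Z_i| = d}`.  Consequently,
the maximal dimension `d` and the number of Stanley spaces of maximal dimension are the
same for every Stanley decomposition of `I/J`. -/
theorem hilbert_series_stanley_decomposition {n : ℕ} (A : Finset (Fin n))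
    (I J : Set (Fin n → ℤ))
    (hI : IsMonomialIdeal A I) (hJ : IsMonomialIdeal A J) (hJI : J ⊂ I)
    {r : ℕ} (u : Fin r → Fin n → ℤ) (Z : Fin r → Finset (Fin n × Bool))
    (hD : IsStanleyDecompOn A (I \ J) u Z) :
    (∃ P : Polynomial ℚ,
      hilbSeries (I \ J) * (1 - PowerSeries.X) ^ (Finset.univ.sup fun i => (Z i).card) =
        (P : PowerSeries ℚ) ∧
      P.eval 1 = ((Finset.univ.filter fun i : Fin r =>
          (Z i).card = Finset.univ.sup fun j => (Z j).card).card : ℚ)) ∧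
    ∀ (r' : ℕ) (u' : Fin r' → Fin n → ℤ) (Z' : Fin r' → Finset (Fin n × Bool)),
      IsStanleyDecompOn A (I \ J) u' Z' →
      (Finset.univ.sup fun i => (Z i).card) = (Finset.univ.sup fun i => (Z' i).card) ∧
      (Finset.univ.filter fun i : Fin r =>
          (Z i).card = Finset.univ.sup fun j => (Z j).card).card =
        (Finset.univ.filter fun i : Fin r' =>
          (Z' i).card = Finset.univ.sup fun j => (Z' j).card).card :=
  hilbert_series_stanley_decomposition_general A I J hJI u Z hD
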